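/- arXiv:1910.06740 — 5 statements merged into one kernel-verified Lean document; each statement's English description precedes it below -/
import Mathlib

section
/- For any positive integers a, b, c, and t with c ≤ a ≤ b, the product (C(c+t−1, t)/C(c+b−a+3t−1, t)) · (C(b+3t−1, t)/C(a+t−1, t)) is at most 1. -/
open Filter Finset

/-- The number of runs of a binary sequence (maximal blocks of equal consecutive symbols). -/
def runsCount (x : List Bool) : ℕ := (x.destutter (· ≠ ·)).length

/-- The deletion sphere `dS^t(x)`: all sequences obtained from `x` by deleting `t` symbols,
i.e. the sublists of `x` of length `x.length - t`. -/
def delSphere (t : ℕ) (x : List Bool) : Set (List Bool) :=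
  {y | y.Sublist x ∧ y.length = x.length - t}

/-- `dS^t(X)` for a set `X` of sequences. -/
def delSphereSet (t : ℕ) (X : Set (List Bool)) : Set (List Bool) :=
  ⋃ x ∈ X, delSphere t x

/-- A `t`-deletion code of length `n`: a set of binary sequences of length `n`
with pairwise disjoint deletion spheres. -/
def IsDeletionCode (t n : ℕ) (C : Set (List Bool)) : Prop :=
  (∀ c ∈ C, c.length = n) ∧
  ∀ c ∈ C, ∀ d ∈ C, c ≠ d → delSphere t c ∩ delSphere t d = ∅

/-- A perfect `t`-deletion code of length `n`: the deletion spheres of codewords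
cover all of `𝔹^{n-t}`. -/
def IsPerfectDeletionCode (t n : ℕ) (C : Set (List Bool)) : Prop :=
  IsDeletionCode t n C ∧ delSphereSet t C = {y : List Bool | y.length = n - t}

/-- `M^t(n)`: the maximum cardinality of a `t`-deletion code of length `n`. -/
noncomputable def maxDelCodeSize (t n : ℕ) : ℕ :=
  sSup {m : ℕ | ∃ C : Set (List Bool), IsDeletionCode t n C ∧ C.ncard = m}


lemma choose_ratio_step (t m M : ℕ) (ht : t ≤ m) (hmM : m ≤ M) :
    m.choose t * (M+1).choose t ≤ (m+1).choose t * M.choose t := by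
  have hu : 0 < m + 1 - t := by omega
  have hv : 0 < M + 1 - t := by omega
  refine Nat.le_of_mul_le_mul_right ?_ hv
  refine Nat.le_of_mul_le_mul_right ?_ hu
  have h1 := Nat.choose_mul_succ_eq m t
  have h2 := Nat.choose_mul_succ_eq M t
  have key : (m+1-t) * (M+1) ≤ (M+1-t) * (m+1) := by
    obtain ⟨u, hu'⟩ : ∃ u, m + 1 = u + t := ⟨m+1-t, by omega⟩
    obtain ⟨v, hv'⟩ : ∃ v, M + 1 = v + t := ⟨M+1-t, by omega⟩
    have huv : u ≤ v := by omega
    have e1 : m + 1 - t = u := by omega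
    have e2 : M + 1 - t = v := by omega
    rw [e1, e2, hu', hv']
    nlinarith [Nat.mul_le_mul_right t huv]
  calc m.choose t * (M+1).choose t * (M+1-t) * (m+1-t)
      = m.choose t * (m+1-t) * ((M+1).choose t * (M+1-t)) := by ring
    _ = m.choose t * (m+1-t) * (M.choose t * (M+1)) := by rw [← h2]
    _ = m.choose t * M.choose t * ((m+1-t) * (M+1)) := by ring
    _ ≤ m.choose t * M.choose t * ((M+1-t) * (m+1)) :=
        Nat.mul_le_mul_left _ key
    _ = (m.choose t * (m+1)) * M.choose t * (M+1-t) := by ring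
    _ = ((m+1).choose t * (m+1-t)) * M.choose t * (M+1-t) := by rw [h1]
    _ = (m+1).choose t * M.choose t * (M+1-t) * (m+1-t) := by ring

lemma choose_ratio_shift (t m M d : ℕ) (ht : t ≤ m) (hmM : m ≤ M) :
    m.choose t * (M+d).choose t ≤ (m+d).choose t * M.choose t := by
  induction d with
  | zero => simp [Nat.mul_comm]
  | succ d ih =>
    show m.choose t * (M+d+1).choose t ≤ (m+d+1).choose t * M.choose t
    have hstep := choose_ratio_step t (m+d) (M+d) (by omega) (by omega)
    have hpos : 0 < (m+d).choose t * (M+d).choose t :=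
      Nat.mul_pos (Nat.choose_pos (by omega)) (Nat.choose_pos (by omega))
    refine Nat.le_of_mul_le_mul_right ?_ hpos
    calc m.choose t * (M+d+1).choose t * ((m+d).choose t * (M+d).choose t)
        = (m.choose t * (M+d).choose t) * ((m+d).choose t * (M+d+1).choose t) := by ring
      _ ≤ ((m+d).choose t * M.choose t) * ((m+d+1).choose t * (M+d).choose t) :=
          Nat.mul_le_mul ih hstep
      _ = (m+d+1).choose t * M.choose t * ((m+d).choose t * (M+d).choose t) := by ring

/-- Product of binomial ratios is at most 1 whenever `c ≤ a ≤ b`. -/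
theorem binom_ratio_prod_le_one (a b c t : ℕ) (ha : 0 < a) (hb : 0 < b) (hc : 0 < c)
    (ht : 0 < t) (hca : c ≤ a) (hab : a ≤ b) :
    (((c + t - 1).choose t : ℝ) / ((c + b - a + 3 * t - 1).choose t : ℝ)) *
      (((b + 3 * t - 1).choose t : ℝ) / ((a + t - 1).choose t : ℝ)) ≤ 1 := by

  have h1 : c+t-1+(a-c) = a+t-1 := by omega
  have h2 : c+b-a+3*t-1+(a-c) = b+3*t-1 := by omega
  have key := choose_ratio_shift t (c+t-1) (c+b-a+3*t-1) (a-c) (by omega) (by omega)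
  rw [h1, h2] at key
  have hD1 : (0:ℝ) < ((c+b-a+3*t-1).choose t : ℝ) := by
    exact_mod_cast Nat.choose_pos (by omega)
  have hD2 : (0:ℝ) < ((a+t-1).choose t : ℝ) := by
    exact_mod_cast Nat.choose_pos (by omega)
  rw [div_mul_div_comm, div_le_one (by positivity), mul_comm (((c+b-a+3*t-1).choose t : ℝ))]
  exact_mod_cast key
end

section
/- Fix a positive integer t and define l : ℤ_{>0} → ℝ by l(n) := (2^n/C(n−1,t)) · ((⌊n^{1/3}⌋+1)/(⌊n^{1/3}⌋+1+2t)) · (C(⌊n^{2/3}⌋+t−1, t)/C(⌊n^{2/3}⌋+⌊n^{1/3}⌋+3t−1, t)) · (1 − Σ_{0 ≤ r < ⌊n^{1/3}⌋−1+⌊n^{2/3}⌋+t} C(n−1,r)/2^{n−1} − Σ_{n−1−⌊n^{2/3}⌋+t < r ≤ n−1} C(n−1,r)/2^{n−1}). Then lim_{n→∞} l(n)·n^t/(t!·2^n) = 1. -/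
open Filter Finset

/-!
The four factors of `l n` are treated separately. Since `C(N, t) ~ N^t / t!`, the first factor
is `~ t! 2^n / n^t`. The second and third tend to `1` because `⌊n^{1/3}⌋ → ∞` and
`⌊n^{1/3}⌋ = o(⌊n^{2/3}⌋)`. Both binomial tails have `O(n^{2/3})` terms (the upper one after the
reflection `r ↦ n - 1 - r`), so they are at most `n^{O(n^{2/3})} / 2^{n-1} → 0`.
-/

open Real Asymptotics Topology

section Asymptotics

variable {α : Type*} {l : Filter α}

lemma isLittleO_rpow_rpow_atTop {p q : ℝ} (hpq : p < q) :
    (fun x : ℝ => x ^ p) =o[atTop] fun x => x ^ q := by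
  refine (isLittleO_iff_tendsto' ?_).2 ?_
  · filter_upwards [eventually_gt_atTop 0] with x hx h
    exact absurd h (rpow_pos_of_pos hx q).ne'
  · refine (tendsto_rpow_neg_atTop (sub_pos.2 hpq)).congr' ?_
    filter_upwards [eventually_gt_atTop 0] with x hx
    rw [← rpow_sub hx, neg_sub]

lemma isLittleO_rpow_mul_log_atTop {p : ℝ} (hp : p < 1) :
    (fun x : ℝ => x ^ p * log x) =o[atTop] id := by
  refine ((isBigO_refl (fun x : ℝ => x ^ p) atTop).mul_isLittleO
    (isLittleO_log_rpow_atTop (sub_pos.2 hp))).congr' EventuallyEq.rfl ?_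
  filter_upwards [eventually_gt_atTop 0] with x hx
  rw [← rpow_add hx, add_sub_cancel, rpow_one, id]

lemma isEquivalent_add_const {u : α → ℝ} (hu : Tendsto u l atTop) (c : ℝ) :
    (fun x => u x + c) ~[l] u :=
  IsEquivalent.refl.add_isLittleO
    (isLittleO_const_left.2 (Or.inr (tendsto_norm_atTop_atTop.comp hu)))

lemma tendsto_div_add_const_atTop {u : α → ℝ} (hu : Tendsto u l atTop) (c : ℝ) :
    Tendsto (fun x => u x / (u x + c)) l (𝓝 1) := by
  have hne : ∀ᶠ x in l, u x + c ≠ 0 :=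
    (tendsto_atTop_add_const_right l c hu).eventually_ne_atTop 0
  exact (isEquivalent_iff_tendsto_one hne).1 (isEquivalent_add_const hu c).symm

end Asymptotics

section NatFloorRpow

lemma tendsto_natFloor_rpow_atTop {p : ℝ} (hp : 0 < p) :
    Tendsto (fun n : ℕ => ⌊(n : ℝ) ^ p⌋₊) atTop atTop :=
  tendsto_nat_floor_atTop.comp ((tendsto_rpow_atTop hp).comp tendsto_natCast_atTop_atTop)

lemma isEquivalent_natFloor_rpow {p : ℝ} (hp : 0 < p) :
    (fun n : ℕ => (⌊(n : ℝ) ^ p⌋₊ : ℝ)) ~[atTop] fun n => (n : ℝ) ^ p :=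
  isEquivalent_nat_floor.comp_tendsto ((tendsto_rpow_atTop hp).comp tendsto_natCast_atTop_atTop)

lemma isBigO_natFloor_rpow_rpow {p q : ℝ} (hpq : p ≤ q) :
    (fun n : ℕ => (⌊(n : ℝ) ^ p⌋₊ : ℝ)) =O[atTop] fun n => (n : ℝ) ^ q := by
  refine IsBigO.of_bound 1 ?_
  filter_upwards [eventually_ge_atTop 1] with n hn
  have hn' : (1 : ℝ) ≤ n := by exact_mod_cast hn
  rw [one_mul, norm_of_nonneg (by positivity), norm_of_nonneg (by positivity)]
  exact (Nat.floor_le (by positivity)).trans (rpow_le_rpow_of_exponent_le hn' hpq)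

lemma isLittleO_natFloor_rpow_natFloor_rpow {p q : ℝ} (hp : 0 < p) (hpq : p < q) :
    (fun n : ℕ => (⌊(n : ℝ) ^ p⌋₊ : ℝ)) =o[atTop] fun n => (⌊(n : ℝ) ^ q⌋₊ : ℝ) :=
  (isEquivalent_natFloor_rpow hp).isBigO.trans_isLittleO
    (((isLittleO_rpow_rpow_atTop hpq).comp_tendsto tendsto_natCast_atTop_atTop).trans_isBigO
      (isEquivalent_natFloor_rpow (hp.trans hpq)).symm.isBigO)

lemma isBigO_rpow_of_le_natFloor_rpow_add {s : ℕ → ℕ} {p q : ℝ} (hpq : p ≤ q) (hq : 0 < q)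
    (c : ℕ) (hs : ∀ n : ℕ, s n ≤ ⌊(n : ℝ) ^ p⌋₊ + ⌊(n : ℝ) ^ q⌋₊ + c) :
    (fun n : ℕ => (s n : ℝ)) =O[atTop] fun n => (n : ℝ) ^ q := by
  have hc : (fun _ : ℕ => (c : ℝ)) =O[atTop] fun n : ℕ => (n : ℝ) ^ q :=
    (isLittleO_const_left.2 <| Or.inr <| tendsto_norm_atTop_atTop.comp <|
      (tendsto_rpow_atTop hq).comp tendsto_natCast_atTop_atTop).isBigO
  refine (isBigO_of_le _ fun n => ?_).trans
    (((isBigO_natFloor_rpow_rpow hpq).add (isBigO_natFloor_rpow_rpow le_rfl)).add hc)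
  rw [Real.norm_natCast, norm_of_nonneg (by positivity)]
  exact_mod_cast hs n

end NatFloorRpow

section Binomial

variable {α : Type*} {l : Filter α}

lemma isEquivalent_natCast_add_sub {a b : α → ℕ} (ha : Tendsto a l atTop)
    (hb : (fun x => (b x : ℝ)) =o[l] fun x => (a x : ℝ)) (c e : ℕ) :
    (fun x => ((a x + b x + c - e : ℕ) : ℝ)) ~[l] fun x => (a x : ℝ) := by
  have ha' : Tendsto (fun x => (a x : ℝ)) l atTop := tendsto_natCast_atTop_atTop.comp ha
  have hbc : (fun x => (b x : ℝ) + ((c : ℝ) - e)) =o[l] fun x => (a x : ℝ) :=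
    hb.add (isLittleO_const_left.2 (Or.inr (tendsto_norm_atTop_atTop.comp ha')))
  refine (IsEquivalent.refl.add_isLittleO hbc).congr_left ?_
  filter_upwards [ha.eventually_ge_atTop e] with x hx
  simp only [Pi.add_apply]
  rw [Nat.cast_sub (by omega)]
  push_cast
  ring

lemma tendsto_choose_div_choose (t : ℕ) {a b : α → ℕ} (ha : Tendsto a l atTop)
    (hab : (fun x => (a x : ℝ)) ~[l] fun x => (b x : ℝ)) :
    Tendsto (fun x => ((a x).choose t : ℝ) / ((b x).choose t : ℝ)) l (𝓝 1) := by
  have hb : Tendsto b l atTop :=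
    tendsto_natCast_atTop_iff.1 (hab.tendsto_atTop (tendsto_natCast_atTop_atTop.comp ha))
  have hchoose {c : α → ℕ} (hc : Tendsto c l atTop) :
      (fun x => ((c x).choose t : ℝ)) ~[l] fun x => (c x : ℝ) ^ t / t.factorial :=
    (isEquivalent_choose t).comp_tendsto hc
  have hne : ∀ᶠ x in l, ((b x).choose t : ℝ) ≠ 0 := by
    filter_upwards [hb.eventually_ge_atTop t] with x hx
    exact_mod_cast (Nat.choose_pos hx).ne'
  exact (isEquivalent_iff_tendsto_one hne).1
    ((hchoose ha).trans (((hab.pow t).div IsEquivalent.refl).trans (hchoose hb).symm))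

lemma tendsto_choose_add_div_choose_add (t c d : ℕ) {a b : α → ℕ} (ha : Tendsto a l atTop)
    (hb : (fun x => (b x : ℝ)) =o[l] fun x => (a x : ℝ)) :
    Tendsto (fun x => ((a x + c - 1).choose t : ℝ) / ((a x + b x + d - 1).choose t : ℝ))
      l (𝓝 1) := by
  have hnum := isEquivalent_natCast_add_sub ha (b := fun _ => 0) (by simp) c 1
  have hden := isEquivalent_natCast_add_sub ha hb d 1
  refine tendsto_choose_div_choose t ?_ (hnum.trans hden.symm)
  exact tendsto_atTop_mono (fun x => Nat.sub_le_sub_right (Nat.le_add_right _ _) 1)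
    ((tendsto_sub_atTop_nat 1).comp ha)

lemma tendsto_pow_div_factorial_mul_choose_pred (t : ℕ) :
    Tendsto (fun n : ℕ => (n : ℝ) ^ t / (t.factorial * ((n - 1).choose t : ℝ))) atTop (𝓝 1) := by
  have hpred := isEquivalent_natCast_add_sub tendsto_id (b := fun _ => 0) (by simp) 0 1
  have hchoose : (fun n : ℕ => ((n - 1).choose t : ℝ)) ~[atTop]
      fun n => (n : ℝ) ^ t / t.factorial :=
    ((isEquivalent_choose t).comp_tendsto (tendsto_sub_atTop_nat 1)).trans
      ((hpred.pow t).div IsEquivalent.refl)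
  have hne : ∀ᶠ n : ℕ in atTop, ((n - 1).choose t : ℝ) ≠ 0 := by
    filter_upwards [eventually_ge_atTop (t + 1)] with n hn
    exact_mod_cast (Nat.choose_pos (by omega)).ne'
  refine ((isEquivalent_iff_tendsto_one hne).1 hchoose.symm).congr fun n => ?_
  simp only [Pi.div_apply, div_div]

end Binomial

section BinomialTail

lemma sum_range_choose_lt_pow {N : ℕ} (hN : 2 ≤ N) (s : ℕ) :
    ∑ r ∈ range s, N.choose r < N ^ s :=
  (sum_le_sum fun r _ => Nat.choose_le_pow N r).trans_lt (Nat.geomSum_lt hN fun _ => mem_range.1)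

lemma sum_Icc_choose_eq_sum_range {M : Type*} [AddCommMonoid M] (f : ℕ → M) (a N : ℕ) :
    ∑ r ∈ Icc a N, f (N.choose r) = ∑ r ∈ range (N + 1 - a), f (N.choose r) := by
  refine sum_nbij' (fun r => N - r) (fun r => N - r) (fun r hr => ?_) (fun r hr => ?_)
    (fun r hr => ?_) (fun r hr => ?_) (fun r hr => ?_) <;> simp only [mem_Icc, mem_range] at hr ⊢
  all_goals first | omega | rw [Nat.choose_symm hr.2]

lemma tendsto_pow_div_two_pow {s : ℕ → ℕ}
    (hs : (fun n : ℕ => (s n : ℝ) * log n) =o[atTop] fun n => (n : ℝ)) :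
    Tendsto (fun n : ℕ => (n : ℝ) ^ s n / 2 ^ n) atTop (𝓝 0) := by
  -- `n ^ s / 2 ^ n = exp (n * (s log n / n - log 2))`, and the bracket tends to `-log 2`.
  have hexp : Tendsto (fun n : ℕ => (n : ℝ) * ((s n : ℝ) * log n / n - log 2)) atTop atBot := by
    refine tendsto_natCast_atTop_atTop.atTop_mul_neg (neg_lt_zero.2 (log_pos one_lt_two)) ?_
    simpa using hs.tendsto_div_nhds_zero.sub_const (log 2)
  refine (tendsto_exp_atBot.comp hexp).congr' ?_
  filter_upwards [eventually_gt_atTop 0] with n hn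
  have hn' : (0 : ℝ) < n := by exact_mod_cast hn
  rw [Function.comp_apply, mul_sub, mul_div_cancel₀ _ hn'.ne', exp_sub, ← log_pow, ← log_pow,
    exp_log (by positivity), exp_log (by positivity)]

lemma tendsto_sum_range_choose_pred_div_two_pow {s : ℕ → ℕ} {p : ℝ} (hp : p < 1)
    (hs : (fun n : ℕ => (s n : ℝ)) =O[atTop] fun n => (n : ℝ) ^ p) :
    Tendsto (fun n : ℕ => ∑ r ∈ range (s n), ((n - 1).choose r : ℝ) / 2 ^ (n - 1))
      atTop (𝓝 0) := by
  have hlog : (fun n : ℕ => (s n : ℝ) * log n) =o[atTop] fun n => (n : ℝ) :=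
    (hs.mul (isBigO_refl _ _)).trans_isLittleO
      ((isLittleO_rpow_mul_log_atTop hp).comp_tendsto tendsto_natCast_atTop_atTop)
  have hlim := (tendsto_pow_div_two_pow hlog).const_mul 2
  rw [mul_zero] at hlim
  refine squeeze_zero' (Eventually.of_forall fun n => by positivity) ?_ hlim
  filter_upwards [eventually_ge_atTop 3] with n hn
  have hsum : (∑ r ∈ range (s n), (n - 1).choose r : ℝ) ≤ (n : ℝ) ^ s n := by
    have := (sum_range_choose_lt_pow (N := n - 1) (by omega) (s n)).le.trans
      (Nat.pow_le_pow_left (Nat.sub_le n 1) (s n))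
    exact_mod_cast this
  have hpow : (2 : ℝ) ^ n = 2 * 2 ^ (n - 1) := by
    rw [← pow_succ', Nat.sub_add_cancel (by omega)]
  calc ∑ r ∈ range (s n), ((n - 1).choose r : ℝ) / 2 ^ (n - 1)
      ≤ (n : ℝ) ^ s n / 2 ^ (n - 1) := by
        rw [← sum_div]
        exact div_le_div_of_nonneg_right hsum (by positivity)
    _ = 2 * ((n : ℝ) ^ s n / 2 ^ n) := by
        rw [hpow]
        field_simp

end BinomialTail

theorem lower_bound_asymptotic_general (t : ℕ) (l : ℕ → ℝ)
    (hl : ∀ n : ℕ, 0 < n → l n =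
      ((2 : ℝ) ^ n / ((n - 1).choose t : ℝ)) *
      (((⌊(n : ℝ) ^ ((1 : ℝ) / 3)⌋₊ : ℝ) + 1) / ((⌊(n : ℝ) ^ ((1 : ℝ) / 3)⌋₊ : ℝ) + 1 + 2 * t)) *
      (((⌊(n : ℝ) ^ ((2 : ℝ) / 3)⌋₊ + t - 1).choose t : ℝ) /
        ((⌊(n : ℝ) ^ ((2 : ℝ) / 3)⌋₊ + ⌊(n : ℝ) ^ ((1 : ℝ) / 3)⌋₊ + 3 * t - 1).choose t : ℝ)) *
      (1
        - ∑ r ∈ Finset.range (⌊(n : ℝ) ^ ((1 : ℝ) / 3)⌋₊ - 1 + ⌊(n : ℝ) ^ ((2 : ℝ) / 3)⌋₊ + t),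
            ((n - 1).choose r : ℝ) / 2 ^ (n - 1)
        - ∑ r ∈ Finset.Icc (n - 1 - ⌊(n : ℝ) ^ ((2 : ℝ) / 3)⌋₊ + t + 1) (n - 1),
            ((n - 1).choose r : ℝ) / 2 ^ (n - 1))) :
    Tendsto (fun n : ℕ => l n * (n : ℝ) ^ t / ((t.factorial : ℝ) * 2 ^ n)) atTop (nhds 1) := by
  have hm := tendsto_natFloor_rpow_atTop (p := 1 / 3) (by norm_num)
  have hk := tendsto_natFloor_rpow_atTop (p := 2 / 3) (by norm_num)
  have hF2 := tendsto_div_add_const_atTop (u := fun n : ℕ => (⌊(n : ℝ) ^ ((1 : ℝ) / 3)⌋₊ : ℝ) + 1)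
    (tendsto_atTop_add_const_right _ 1 (tendsto_natCast_atTop_atTop.comp hm)) (2 * t)
  have hF3 := tendsto_choose_add_div_choose_add t t (3 * t) hk
    (isLittleO_natFloor_rpow_natFloor_rpow (p := 1 / 3) (q := 2 / 3) (by norm_num) (by norm_num))
  have hO {s : ℕ → ℕ}
      (hs : ∀ n : ℕ, s n ≤ ⌊(n : ℝ) ^ ((1 : ℝ) / 3)⌋₊ + ⌊(n : ℝ) ^ ((2 : ℝ) / 3)⌋₊ + t) :=
    isBigO_rpow_of_le_natFloor_rpow_add (by norm_num) (by norm_num) t hs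
  have hS1 := tendsto_sum_range_choose_pred_div_two_pow (by norm_num) (hO (s := fun n =>
    ⌊(n : ℝ) ^ ((1 : ℝ) / 3)⌋₊ - 1 + ⌊(n : ℝ) ^ ((2 : ℝ) / 3)⌋₊ + t) fun n => by omega)
  have hS2 := (tendsto_sum_range_choose_pred_div_two_pow (by norm_num) (hO (s := fun n =>
    n - 1 + 1 - (n - 1 - ⌊(n : ℝ) ^ ((2 : ℝ) / 3)⌋₊ + t + 1)) fun n => by omega)).congr
    fun n => (sum_Icc_choose_eq_sum_range (fun c : ℕ => (c : ℝ) / 2 ^ (n - 1)) _ _).symm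
  have hlim := ((tendsto_pow_div_factorial_mul_choose_pred t |>.mul hF2).mul hF3).mul
    ((tendsto_const_nhds (x := (1 : ℝ))).sub hS1 |>.sub hS2)
  rw [show (1 : ℝ) * 1 * 1 * (1 - 0 - 0) = 1 by norm_num] at hlim
  refine hlim.congr' ?_
  filter_upwards [eventually_gt_atTop 0] with n hn
  rw [hl n hn]
  field_simp

/-- The lower-bound function `l` is asymptotically `t!·2^n/n^t`. -/
theorem lower_bound_asymptotic (t : ℕ) (ht : 0 < t) (l : ℕ → ℝ)
    (hl : ∀ n : ℕ, 0 < n → l n =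
      ((2 : ℝ) ^ n / ((n - 1).choose t : ℝ)) *
      (((⌊(n : ℝ) ^ ((1 : ℝ) / 3)⌋₊ : ℝ) + 1) / ((⌊(n : ℝ) ^ ((1 : ℝ) / 3)⌋₊ : ℝ) + 1 + 2 * t)) *
      (((⌊(n : ℝ) ^ ((2 : ℝ) / 3)⌋₊ + t - 1).choose t : ℝ) /
        ((⌊(n : ℝ) ^ ((2 : ℝ) / 3)⌋₊ + ⌊(n : ℝ) ^ ((1 : ℝ) / 3)⌋₊ + 3 * t - 1).choose t : ℝ)) *
      (1
        - ∑ r ∈ Finset.range (⌊(n : ℝ) ^ ((1 : ℝ) / 3)⌋₊ - 1 + ⌊(n : ℝ) ^ ((2 : ℝ) / 3)⌋₊ + t),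
            ((n - 1).choose r : ℝ) / 2 ^ (n - 1)
        - ∑ r ∈ Finset.Icc (n - 1 - ⌊(n : ℝ) ^ ((2 : ℝ) / 3)⌋₊ + t + 1) (n - 1),
            ((n - 1).choose r : ℝ) / 2 ^ (n - 1))) :
    Tendsto (fun n : ℕ => l n * (n : ℝ) ^ t / ((t.factorial : ℝ) * 2 ^ n)) atTop (nhds 1) :=
  lower_bound_asymptotic_general t l hl
end

section
/- Let C be a perfect t-deletion binary code of length n with t < n. For any positive integers a and b with a ≤ b ≤ n − t, dS^t(⋃_{a ≤ r ≤ b+2t} C_r) ⊇ ⋃_{a ≤ r ≤ b} (𝔹^{n−t})_r. In particular, Σ_{a ≤ r ≤ b+2t} #dS^t(C_r) ≥ 2·Σ_{a ≤ p ≤ b} C(n−t−1, p−1). -/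
open Filter Finset

/-! Deleting a symbol never increases the number of runs and lowers it by at most two, so a
codeword `c` whose deletion sphere contains a sequence `y` with `r` runs has `r ≤ ‖c‖ ≤ r + 2t`;
as the spheres of a perfect code cover `𝔹^{n-t}`, the layers `(𝔹^{n-t})_r`, `a ≤ r ≤ b`, are
covered by the spheres of the codewords with `a` to `b + 2t` runs. Prepending a symbol to a
nonempty sequence keeps its number of runs or raises it by one, which gives Pascal's recurrence
for the layer sizes, `#(𝔹^m)_p = 2·C(m-1, p-1)`. -/

lemma runsCount_cons (b : Bool) (l : List Bool) :
    runsCount (b :: l) = runsCount l + if l.head? = some b then 0 else 1 := by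
  cases l with
  | nil => rfl
  | cons c l =>
    by_cases hcb : c = b
    · subst hcb
      simp [runsCount, List.destutter_cons']
    · simp [runsCount, List.destutter_cons', hcb, Ne.symm hcb]

lemma runsCount_le_runsCount_cons (b : Bool) (l : List Bool) :
    runsCount l ≤ runsCount (b :: l) := by
  rw [runsCount_cons]; omega

lemma runsCount_cons_le (b : Bool) (l : List Bool) : runsCount (b :: l) ≤ runsCount l + 1 := by
  rw [runsCount_cons]; split <;> omega

lemma runsCount_le_of_sublist {x y : List Bool} (h : y.Sublist x) : runsCount y ≤ runsCount x :=
  (List.isChain_destutter _ y).length_le_length_destutter_ne ((List.destutter_sublist _ y).trans h)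

lemma runsCount_cons_add_le_of_sublist {x y : List Bool} (h : y.Sublist x) (b : Bool) :
    runsCount (b :: x) + 2 * y.length ≤ runsCount (b :: y) + 2 * x.length := by
  induction h generalizing b with
  | slnil => simp
  | @cons y l c h ih =>
    have := ih c
    have := runsCount_cons_le b (c :: l)
    have := runsCount_cons_le c y
    have := runsCount_le_runsCount_cons b y
    simp only [List.length_cons]
    omega
  | @cons_cons y l c h ih =>
    have := ih c
    rw [runsCount_cons b (c :: l), runsCount_cons b (c :: y)]
    simp only [List.head?_cons, Option.some.injEq, List.length_cons]
    split_ifs <;> omega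

lemma runsCount_add_le_of_sublist {x y : List Bool} (h : y.Sublist x) :
    runsCount x + 2 * y.length ≤ runsCount y + 2 * x.length := by
  induction h with
  | slnil => simp
  | @cons y l c h ih =>
    have := runsCount_cons_le c l
    simp only [List.length_cons]
    omega
  | @cons_cons y l c h =>
    have := runsCount_cons_add_le_of_sublist h c
    simp only [List.length_cons]
    omega

lemma runsCount_mem_Icc_of_mem_delSphere {t : ℕ} {x y : List Bool} (hy : y ∈ delSphere t x) :
    runsCount x ∈ Set.Icc (runsCount y) (runsCount y + 2 * t) := by
  obtain ⟨hsub, hlen⟩ := hy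
  have := runsCount_add_le_of_sublist hsub
  exact ⟨runsCount_le_of_sublist hsub, by omega⟩

/-- The layer `(𝔹^m)_r`. -/
def runsLayer (m r : ℕ) : Set (List Bool) := {y | y.length = m ∧ runsCount y = r}

lemma runsLayer_finite (m r : ℕ) : (runsLayer m r).Finite :=
  (List.finite_length_eq Bool m).subset fun _ hy => hy.1

lemma runsLayer_succ_zero (m : ℕ) : runsLayer (m + 1) 0 = ∅ := by
  ext (_ | ⟨b, l⟩)
  · simp [runsLayer]
  · simp [runsLayer, runsCount]

lemma runsLayer_one (p : ℕ) : runsLayer 1 (p + 1) = if p = 0 then {[false], [true]} else ∅ := by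
  ext (_ | ⟨b, _ | ⟨c, l⟩⟩)
  · simp [runsLayer]
  · cases b <;> split_ifs <;> simp_all [runsLayer, runsCount, eq_comm]
  · simp [runsLayer]

lemma runsLayer_succ_succ (m p : ℕ) :
    runsLayer (m + 2) (p + 1) =
      (fun l => l.headI :: l) '' runsLayer (m + 1) (p + 1) ∪
        (fun l => (!l.headI) :: l) '' runsLayer (m + 1) p := by
  ext x
  constructor
  · obtain _ | ⟨b, _ | ⟨c, l⟩⟩ := x <;> rintro ⟨hlen, hruns⟩
    · simp at hlen
    · simp at hlen
    rw [runsCount_cons] at hruns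
    by_cases hcb : c = b
    · subst hcb
      exact Or.inl ⟨c :: l, ⟨by simpa using hlen, by simpa using hruns⟩, rfl⟩
    · refine Or.inr ⟨c :: l, ⟨by simpa using hlen, by simpa [hcb] using hruns⟩, ?_⟩
      cases b <;> cases c <;> simp_all
  · rintro (⟨_ | ⟨c, l⟩, ⟨hlen, hruns⟩, rfl⟩ | ⟨_ | ⟨c, l⟩, ⟨hlen, hruns⟩, rfl⟩)
    all_goals simp_all [runsLayer, runsCount_cons]

lemma ncard_runsLayer (m p : ℕ) : (runsLayer (m + 1) (p + 1)).ncard = 2 * m.choose p := by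
  induction m generalizing p with
  | zero =>
    rw [runsLayer_one]
    split_ifs with hp
    · simp [hp]
    · simp [Nat.choose_eq_zero_of_lt (Nat.pos_of_ne_zero hp)]
  | succ m ih =>
    have hinj (f : List Bool → Bool) : Function.Injective fun l => f l :: l :=
      fun _ _ h => (List.cons.inj h).2
    have hdisj : Disjoint ((fun l => l.headI :: l) '' runsLayer (m + 1) (p + 1))
        ((fun l => (!l.headI) :: l) '' runsLayer (m + 1) p) := by
      rw [Set.disjoint_left]
      rintro _ ⟨l, -, rfl⟩ ⟨l', -, h⟩
      obtain ⟨hb, rfl⟩ := List.cons.inj h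
      simp at hb
    rw [runsLayer_succ_succ, Set.ncard_union_eq hdisj ((runsLayer_finite _ _).image _)
      ((runsLayer_finite _ _).image _), Set.ncard_image_of_injective _ (hinj _),
      Set.ncard_image_of_injective _ (hinj _), ih]
    cases p with
    | zero => simp [runsLayer_succ_zero]
    | succ p => rw [ih, Nat.choose_succ_succ]; ring

lemma ncard_biUnion_runsLayer (m : ℕ) (s : Finset ℕ) :
    (⋃ r ∈ s, runsLayer m r).ncard = ∑ r ∈ s, (runsLayer m r).ncard := by
  rw [← finsum_mem_coe_finset]
  exact s.finite_toSet.ncard_biUnion (fun r _ => runsLayer_finite m r)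
    fun p _ q _ hpq => Set.disjoint_left.2 fun _ hp hq => hpq (hp.2.symm.trans hq.2)

lemma delSphereSet_mono (t : ℕ) {X Y : Set (List Bool)} (h : X ⊆ Y) :
    delSphereSet t X ⊆ delSphereSet t Y :=
  Set.biUnion_subset_biUnion_left h

lemma delSphereSet_iUnion {ι : Sort*} (t : ℕ) (X : ι → Set (List Bool)) :
    delSphereSet t (⋃ i, X i) = ⋃ i, delSphereSet t (X i) :=
  Set.biUnion_iUnion X (delSphere t)

lemma runsLayer_subset_delSphereSet {t m r : ℕ} {C : Set (List Bool)}
    (hcover : delSphereSet t C = {y | y.length = m}) :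
    runsLayer m r ⊆ delSphereSet t {x ∈ C | runsCount x ∈ Set.Icc r (r + 2 * t)} := by
  rintro y ⟨hylen, rfl⟩
  obtain ⟨c, hc, hyc⟩ := Set.mem_iUnion₂.1 (hcover ▸ hylen : y ∈ delSphereSet t C)
  exact Set.mem_biUnion ⟨hc, runsCount_mem_Icc_of_mem_delSphere hyc⟩ hyc

theorem perfect_code_runs_cover_general (t n : ℕ) (htn : t < n)
    (C : Set (List Bool)) (hC : IsPerfectDeletionCode t n C)
    (a b : ℕ) (ha : 0 < a) :
    ((⋃ r ∈ Finset.Icc a b, {y : List Bool | y.length = n - t ∧ runsCount y = r}) ⊆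
      delSphereSet t (⋃ r ∈ Finset.Icc a (b + 2 * t), {x ∈ C | runsCount x = r})) ∧
    2 * ∑ p ∈ Finset.Icc a b, (n - t - 1).choose (p - 1) ≤
      ∑ r ∈ Finset.Icc a (b + 2 * t), (delSphereSet t {x ∈ C | runsCount x = r}).ncard := by
  obtain ⟨-, hcover⟩ := hC
  have hcov : (⋃ r ∈ Finset.Icc a b, runsLayer (n - t) r) ⊆
      delSphereSet t (⋃ r ∈ Finset.Icc a (b + 2 * t), {x ∈ C | runsCount x = r}) := by
    refine Set.iUnion₂_subset fun r hr => (runsLayer_subset_delSphereSet hcover).trans <|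
      delSphereSet_mono t fun x ⟨hx, hlo, hhi⟩ => Set.mem_biUnion ?_ ⟨hx, rfl⟩
    simp only [Finset.coe_Icc, Set.mem_Icc, Finset.mem_Icc] at hr ⊢
    omega
  refine ⟨hcov, ?_⟩
  obtain ⟨m, hm⟩ : ∃ m, n - t = m + 1 := ⟨n - t - 1, by omega⟩
  calc 2 * ∑ p ∈ Finset.Icc a b, (n - t - 1).choose (p - 1)
      = ∑ p ∈ Finset.Icc a b, (runsLayer (n - t) p).ncard := by
        rw [mul_sum]
        refine sum_congr rfl fun p hp => ?_
        obtain ⟨q, rfl⟩ : ∃ q, p = q + 1 := ⟨p - 1, by simp at hp; omega⟩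
        simp [hm, ncard_runsLayer]
    _ = (⋃ p ∈ Finset.Icc a b, runsLayer (n - t) p).ncard := (ncard_biUnion_runsLayer _ _).symm
    _ ≤ (delSphereSet t (⋃ r ∈ Finset.Icc a (b + 2 * t), {x ∈ C | runsCount x = r})).ncard :=
        Set.ncard_le_ncard hcov <| (List.finite_length_eq Bool (n - t)).subset <|
          hcover ▸ delSphereSet_mono t (Set.iUnion₂_subset fun _ _ => Set.sep_subset C _)
    _ ≤ ∑ r ∈ Finset.Icc a (b + 2 * t), (delSphereSet t {x ∈ C | runsCount x = r}).ncard := by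
        simp only [delSphereSet_iUnion]
        exact set_ncard_biUnion_le _ _

/-- Covering property of a perfect `t`-deletion code restricted to runs in `[a, b+2t]`,
and the resulting lower bound on the sum of sphere sizes. -/
theorem perfect_code_runs_cover (t n : ℕ) (ht : 0 < t) (htn : t < n)
    (C : Set (List Bool)) (hC : IsPerfectDeletionCode t n C)
    (a b : ℕ) (ha : 0 < a) (hab : a ≤ b) (hb : b ≤ n - t) :
    ((⋃ r ∈ Finset.Icc a b, {y : List Bool | y.length = n - t ∧ runsCount y = r}) ⊆
      delSphereSet t (⋃ r ∈ Finset.Icc a (b + 2 * t), {x ∈ C | runsCount x = r})) ∧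
    2 * ∑ p ∈ Finset.Icc a b, (n - t - 1).choose (p - 1) ≤
      ∑ r ∈ Finset.Icc a (b + 2 * t), (delSphereSet t {x ∈ C | runsCount x = r}).ncard :=
  perfect_code_runs_cover_general t n htn C hC a b ha
end

section
/- The code {000000, 111000, 010101, 111111} ⊆ 𝔹^6 is a perfect 2-deletion code of length 6: the 2-deletion spheres of its four codewords are pairwise disjoint and their union equals 𝔹^4. -/
open Filter Finset

lemma exists_four (y : List Bool) (h : y.length = 4) : ∃ a b c d, y = [a, b, c, d] := by
  match y, h with
  | [a, b, c, d], _ => exact ⟨a, b, c, d, rfl⟩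

/-- `{000000, 111000, 010101, 111111}` is a perfect 2-deletion code of length 6. -/
theorem perfect_two_deletion_code_length_six :
    IsPerfectDeletionCode 2 6
      ({[false, false, false, false, false, false],
        [true, true, true, false, false, false],
        [false, true, false, true, false, true],
        [true, true, true, true, true, true]} : Set (List Bool)) := by
  refine ⟨⟨?_, ?_⟩, ?_⟩
  · intro c hc
    rcases hc with rfl | rfl | rfl | rfl <;> rfl
  · intro c hc d hd hne
    ext y
    simp only [Set.mem_inter_iff, Set.mem_empty_iff_false, iff_false, not_and, delSphere,
      Set.mem_setOf_eq]
    rintro ⟨h1, hl⟩ h2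
    rcases hc with rfl | rfl | rfl | rfl <;>
      rcases hd with rfl | rfl | rfl | rfl <;>
      simp only [List.length] at hl <;>
      first
      | exact absurd rfl hne
      | (obtain ⟨a, b, c, d, rfl⟩ := exists_four y hl
         revert h1 h2
         cases a <;> cases b <;> cases c <;> cases d <;> decide)
  · ext y
    simp only [delSphereSet, delSphere, Set.mem_iUnion, Set.mem_setOf_eq, Set.mem_insert_iff,
      Set.mem_singleton_iff]
    constructor
    · rintro ⟨x, (rfl | rfl | rfl | rfl), -, hl⟩ <;> simpa using hl
    · intro hl
      obtain ⟨a, b, c, d, rfl⟩ := exists_four y hl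
      cases a <;> cases b <;> cases c <;> cases d <;>
        first
        | exact ⟨_, Or.inl rfl, by decide⟩
        | exact ⟨_, Or.inr (Or.inl rfl), by decide⟩
        | exact ⟨_, Or.inr (Or.inr (Or.inl rfl)), by decide⟩
        | exact ⟨_, Or.inr (Or.inr (Or.inr rfl)), by decide⟩
end

section
/- There does not exist any perfect 2-deletion binary code of length 7; that is, no subset C ⊆ 𝔹^7 has pairwise disjoint 2-deletion spheres whose union equals 𝔹^5. -/
open Filter Finset

/-!
A perfect 2-deletion code of length 7 would partition `𝔹^5` into the 2-deletion spheres of its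
codewords. Encoding a word of `𝔹^5` by its binary value and a set of such words as a 32-bit mask,
this is an exact cover of the full mask by sphere masks of words of `𝔹^7`. A backtracking search
that, for each still uncovered word, tries every sphere mask containing it finds every exact cover,
and evaluating it in the kernel shows that there is none.
-/

structure IsExactBitCover (S : Set ℕ) (t : ℕ) : Prop where
  testBit_iff : ∀ k, t.testBit k = true ↔ ∃ b ∈ S, b.testBit k = true
  eq_of_testBit : ∀ a ∈ S, ∀ b ∈ S, ∀ k, a.testBit k = true → b.testBit k = true → a = b

namespace IsExactBitCover

variable {S : Set ℕ} {t b : ℕ}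

theorem land_eq (h : IsExactBitCover S t) (hb : b ∈ S) : b &&& t = b :=
  Nat.eq_of_testBit_eq fun k => by
    cases hbk : b.testBit k
    · simp [hbk]
    · simp [hbk, (h.testBit_iff k).2 ⟨b, hb, hbk⟩]

theorem erase (h : IsExactBitCover S t) (hb : b ∈ S) :
    IsExactBitCover (S \ {b}) (t ^^^ b) where
  testBit_iff k := by
    simp only [Nat.testBit_xor, Set.mem_sdiff, Set.mem_singleton_iff]
    cases hbk : b.testBit k
    · simp only [Bool.xor_false, h.testBit_iff k]
      exact exists_congr fun a => ⟨fun ⟨ha, hak⟩ => ⟨⟨ha, by rintro rfl; simp_all⟩, hak⟩,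
        fun ⟨⟨ha, _⟩, hak⟩ => ⟨ha, hak⟩⟩
    · simp only [(h.testBit_iff k).2 ⟨b, hb, hbk⟩, Bool.xor_self, Bool.false_eq_true, false_iff]
      rintro ⟨a, ⟨ha, hab⟩, hak⟩
      exact hab (h.eq_of_testBit a ha b hb k hak hbk)
  eq_of_testBit a ha a' ha' := h.eq_of_testBit a ha.1 a' ha'.1

end IsExactBitCover

def exactCoverSearch (blocks : List ℕ) : List ℕ → ℕ → Bool
  | [], t => t == 0
  | k :: ks, t =>
    if t.testBit k then
      blocks.any fun b => b.testBit k && b &&& t == b && exactCoverSearch blocks ks (t ^^^ b)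
    else exactCoverSearch blocks ks t

theorem exactCoverSearch_eq_true {blocks positions : List ℕ} {S : Set ℕ} {t : ℕ}
    (hS : ∀ b ∈ S, b ∈ blocks) (hcover : IsExactBitCover S t)
    (hpos : ∀ k, t.testBit k = true → k ∈ positions) :
    exactCoverSearch blocks positions t = true := by
  induction positions generalizing S t with
  | nil =>
    have ht : t = 0 := Nat.zero_of_testBit_eq_false fun k => by
      simpa using mt (hpos k)
    simp [exactCoverSearch, ht]
  | cons k ks ih =>
    by_cases htk : t.testBit k = true
    · obtain ⟨b, hb, hbk⟩ := (hcover.testBit_iff k).1 htk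
      have hpos' : ∀ j, (t ^^^ b).testBit j = true → j ∈ ks := by
        intro j hj
        have hbj : b.testBit j = false := by
          cases hbj : b.testBit j
          · rfl
          · simp [Nat.testBit_xor, hbj, (hcover.testBit_iff j).2 ⟨b, hb, hbj⟩] at hj
        have hjk : j ≠ k := by rintro rfl; simp_all
        simp only [Nat.testBit_xor, hbj, Bool.xor_false] at hj
        simpa [hjk] using hpos j hj
      simp only [exactCoverSearch, htk, if_true, List.any_eq_true, Bool.and_eq_true, beq_iff_eq]
      exact ⟨b, hS b hb, ⟨hbk, hcover.land_eq hb⟩,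
        ih (fun a ha => hS a ha.1) (hcover.erase hb) hpos'⟩
    · have hpos' : ∀ j, t.testBit j = true → j ∈ ks := by
        intro j hj
        have hjk : j ≠ k := by rintro rfl; exact htk hj
        simpa [hjk] using hpos j hj
      simpa [exactCoverSearch, htk] using ih hS hcover hpos'

def bitMask (ks : List ℕ) : ℕ := ks.foldr (fun k m => 2 ^ k ||| m) 0

theorem testBit_bitMask {ks : List ℕ} {k : ℕ} : (bitMask ks).testBit k = true ↔ k ∈ ks := by
  induction ks with
  | nil => simp [bitMask]
  | cons j ks ih =>
    rw [bitMask, List.foldr_cons, ← bitMask, Nat.testBit_or, Bool.or_eq_true, ih,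
      Nat.testBit_two_pow, decide_eq_true_eq, List.mem_cons, eq_comm]

def wordIndex : List Bool → ℕ
  | [] => 0
  | b :: l => Nat.bit b (wordIndex l)

theorem testBit_wordIndex (l : List Bool) (i : ℕ) : (wordIndex l).testBit i = l.getD i false := by
  induction l generalizing i with
  | nil => simp [wordIndex]
  | cons b l ih => cases i <;> simp [wordIndex, Nat.testBit_bit_succ, ih]

theorem eq_of_wordIndex_eq {x y : List Bool} (hlen : x.length = y.length)
    (h : wordIndex x = wordIndex y) : x = y := by
  refine List.ext_getElem hlen fun i hx hy => ?_
  have := testBit_wordIndex x i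
  rw [h, testBit_wordIndex, List.getD_eq_getElem _ _ hx, List.getD_eq_getElem _ _ hy] at this
  exact this.symm

def words (n : ℕ) : List (List Bool) := (List.replicate n [false, true]).sections

theorem mem_words {n : ℕ} {x : List Bool} : x ∈ words n ↔ x.length = n := by
  simp [words, List.mem_sections, List.forall₂_iff_get]

def sphereMask (t : ℕ) (x : List Bool) : ℕ :=
  bitMask ((x.sublistsLen (x.length - t)).map wordIndex)

theorem testBit_sphereMask {t k : ℕ} {x : List Bool} :
    (sphereMask t x).testBit k = true ↔ ∃ y ∈ delSphere t x, wordIndex y = k := by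
  simp [sphereMask, testBit_bitMask, List.mem_sublistsLen, delSphere]

theorem IsPerfectDeletionCode.isExactBitCover {t n : ℕ} {C : Set (List Bool)}
    (hC : IsPerfectDeletionCode t n C) :
    IsExactBitCover (sphereMask t '' C) (bitMask ((words (n - t)).map wordIndex)) where
  testBit_iff k := by
    have hcover (y : List Bool) : y.length = n - t ↔ ∃ c ∈ C, y ∈ delSphere t c := by
      simpa [delSphereSet] using (Set.ext_iff.1 hC.2 y).symm
    simp only [testBit_bitMask, List.mem_map, mem_words, hcover, Set.exists_mem_image,
      testBit_sphereMask]
    exact ⟨fun ⟨y, ⟨c, hc, hy⟩, hyk⟩ => ⟨c, hc, y, hy, hyk⟩,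
      fun ⟨c, hc, y, hy, hyk⟩ => ⟨y, ⟨c, hc, hy⟩, hyk⟩⟩
  eq_of_testBit := by
    rintro _ ⟨c, hc, rfl⟩ _ ⟨d, hd, rfl⟩ k hck hdk
    obtain ⟨y, hy, rfl⟩ := testBit_sphereMask.1 hck
    obtain ⟨z, hz, hzy⟩ := testBit_sphereMask.1 hdk
    have hlen : z.length = y.length := by rw [hz.2, hy.2, hC.1.1 c hc, hC.1.1 d hd]
    obtain rfl := eq_of_wordIndex_eq hlen hzy
    suffices c = d by rw [this]
    by_contra hcd
    exact (hC.1.2 c hc d hd hcd).subset ⟨hy, hz⟩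

/-- There is no perfect 2-deletion binary code of length 7. -/
theorem no_perfect_two_deletion_code_length_seven :
    ¬ ∃ C : Set (List Bool), IsPerfectDeletionCode 2 7 C := by
  rintro ⟨C, hC⟩
  have hsearch := exactCoverSearch_eq_true (blocks := (words 7).map (sphereMask 2))
    (by rintro _ ⟨c, hc, rfl⟩; exact List.mem_map_of_mem (mem_words.2 (hC.1.1 c hc)))
    hC.isExactBitCover (fun _ => testBit_bitMask.1)
  exact absurd hsearch (by decide +kernel)
end
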